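/- Fano inequality for arbitrary relations (finite case): let X, Y, X̂ be random variables on a finite probability space forming a Markov chain X → Y → X̂, and let R be any subset of range(X) × range(X̂). Suppose 0 ≤ p_min < 1, 0 < p_max ≤ 1, p_min + p_max < 1, p_min ≤ inf_{x̂} P((X, x̂) ∈ R) and p_max ≥ sup_{x̂} P((X, x̂) ∈ R). Then, with E the event (X, X̂) ∈ R, P(E) ≤ (I(X; X̂) + h(P(E)) + log(1 - p_min)) / log((1 - p_min)/p_max). -/

import Mathlib

open Finset

open Classical in
noncomputable def pr {Ω : Type*} [Fintype Ω] (μ : Ω → ℝ) (p : Ω → Prop) : ℝ :=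
  ∑ ω ∈ Finset.univ.filter p, μ ω

def IsPMF {Ω : Type*} [Fintype Ω] (μ : Ω → ℝ) : Prop :=
  (∀ ω, 0 ≤ μ ω) ∧ ∑ ω, μ ω = 1

noncomputable def mutInfo {Ω A B : Type*} [Fintype Ω] [Fintype A] [Fintype B]
    (μ : Ω → ℝ) (X : Ω → A) (Y : Ω → B) : ℝ :=
  ∑ a : A, ∑ b : B, pr μ (fun ω => X ω = a ∧ Y ω = b) *
    Real.log (pr μ (fun ω => X ω = a ∧ Y ω = b) /
      (pr μ (fun ω => X ω = a) * pr μ (fun ω => Y ω = b)))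

noncomputable def ent {Ω A : Type*} [Fintype Ω] [Fintype A] (μ : Ω → ℝ) (X : Ω → A) : ℝ :=
  -∑ a : A, pr μ (fun ω => X ω = a) * Real.log (pr μ (fun ω => X ω = a))

noncomputable def condEnt {Ω A B : Type*} [Fintype Ω] [Fintype A] [Fintype B]
    (μ : Ω → ℝ) (X : Ω → A) (Y : Ω → B) : ℝ :=
  ent μ (fun ω => (X ω, Y ω)) - ent μ Y

noncomputable def binEnt (p : ℝ) : ℝ :=
  -(p * Real.log p) - (1 - p) * Real.log (1 - p)

/-- `X → Y → Z` is a Markov chain: `X` and `Z` are conditionally independent given `Y`. -/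
def MarkovChain {Ω A B C : Type*} [Fintype Ω]
    (μ : Ω → ℝ) (X : Ω → A) (Y : Ω → B) (Z : Ω → C) : Prop :=
  ∀ (a : A) (b : B) (c : C),
    pr μ (fun ω => X ω = a ∧ Y ω = b ∧ Z ω = c) * pr μ (fun ω => Y ω = b) =
      pr μ (fun ω => X ω = a ∧ Y ω = b) * pr μ (fun ω => Y ω = b ∧ Z ω = c)

/-! The indicator of `R` pushes the joint law of `(X, X̂)` and the product of its marginals
forward to Bernoulli laws with parameters `p = P(E)` and `q = (P_X ⊗ P_X̂)(R)`, so the log-sum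
inequality gives `I(X; X̂) ≥ binKL p q`. Averaging the hypotheses over `X̂` gives
`pmin ≤ q ≤ pmax`, and `binKL p q` only decreases when `q` is replaced by `pmax` in its first
term and by `pmin` in its second; what remains is
`p log ((1 - pmin) / pmax) - h(p) - log (1 - pmin)`. -/

open Real

section Pr

variable {Ω : Type*} [Fintype Ω] {μ : Ω → ℝ}

lemma pr_nonneg (h : ∀ ω, 0 ≤ μ ω) (p : Ω → Prop) : 0 ≤ pr μ p :=
  sum_nonneg fun ω _ => h ω

lemma pr_mono (h : ∀ ω, 0 ≤ μ ω) {p q : Ω → Prop} (hpq : ∀ ω, p ω → q ω) :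
    pr μ p ≤ pr μ q := by
  classical
  exact sum_le_sum_of_subset_of_nonneg (monotone_filter_right _ fun ω _ => hpq ω)
    fun ω _ _ => h ω

lemma sum_pr_eq_pr_mem {D : Type*} (f : Ω → D) (s : Finset D) :
    ∑ d ∈ s, pr μ (fun ω => f ω = d) = pr μ (fun ω => f ω ∈ s) := by
  classical
  simp only [pr, sum_filter]
  rw [sum_comm]
  exact sum_congr rfl fun ω _ => by simp [eq_comm]

lemma sum_pr_mul_eq_sum_mul {D : Type*} [Fintype D] (f : Ω → D) (g : D → ℝ) :
    ∑ d, pr μ (fun ω => f ω = d) * g d = ∑ ω, μ ω * g (f ω) := by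
  classical
  simp only [pr, sum_filter, sum_mul]
  rw [sum_comm]
  exact sum_congr rfl fun ω _ => by simp [eq_comm]

lemma IsPMF.sum_pr_eq_one (hμ : IsPMF μ) {D : Type*} [Fintype D] (f : Ω → D) :
    ∑ d, pr μ (fun ω => f ω = d) = 1 := by
  classical
  rw [sum_pr_eq_pr_mem, ← hμ.2]
  simp [pr]

end Pr

lemma mul_log_div_sum_le_sum_mul_log_div {ι : Type*} (s : Finset ι) {p q : ι → ℝ}
    (hp : ∀ i ∈ s, 0 ≤ p i) (hq : ∀ i ∈ s, 0 ≤ q i) (hpq : ∀ i ∈ s, q i = 0 → p i = 0) :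
    (∑ i ∈ s, p i) * log ((∑ i ∈ s, p i) / ∑ i ∈ s, q i) ≤
      ∑ i ∈ s, p i * log (p i / q i) := by
  set P := ∑ i ∈ s, p i
  set Q := ∑ i ∈ s, q i
  rcases (sum_nonneg hq : 0 ≤ Q).eq_or_lt with hQ | hQ
  · have hp0 : ∀ i ∈ s, p i = 0 := fun i hi =>
      hpq i hi ((sum_eq_zero_iff_of_nonneg hq).mp hQ.symm i hi)
    rw [show P = 0 from sum_eq_zero hp0, zero_mul]
    exact (sum_eq_zero fun i hi => by simp [hp0 i hi]).ge
  have hcancel : ∀ i ∈ s, q i * (p i / q i) = p i := fun i hi => by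
    rcases eq_or_ne (q i) 0 with h | h
    · simp [h, hpq i hi h]
    · field_simp
  have hjensen := convexOn_mul_log.map_sum_le (t := s) (w := fun i => q i / Q)
    (p := fun i => p i / q i) (fun i hi => div_nonneg (hq i hi) hQ.le)
    (by rw [← sum_div, div_self hQ.ne'])
    (fun i hi => Set.mem_Ici.mpr (div_nonneg (hp i hi) (hq i hi)))
  have hmean : ∑ i ∈ s, (q i / Q) • (p i / q i) = P / Q := by
    rw [sum_div]
    exact sum_congr rfl fun i hi => by rw [smul_eq_mul, div_mul_eq_mul_div, hcancel i hi]
  have hvalue : ∑ i ∈ s, (q i / Q) • (p i / q i * log (p i / q i)) =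
      (∑ i ∈ s, p i * log (p i / q i)) / Q := by
    rw [sum_div]
    exact sum_congr rfl fun i hi => by
      rw [smul_eq_mul, div_mul_eq_mul_div, ← mul_assoc, hcancel i hi]
  rw [hmean, hvalue, le_div_iff₀ hQ] at hjensen
  calc P * log (P / Q) = P / Q * log (P / Q) * Q := by
        rw [mul_right_comm, div_mul_cancel₀ _ hQ.ne']
    _ ≤ _ := hjensen

lemma mul_log_div_le_mul_log_div_of_le {p q r : ℝ} (hp : 0 ≤ p) (hpq : 0 < q ∨ p = 0)
    (hqr : q ≤ r) : p * log (p / r) ≤ p * log (p / q) := by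
  rcases hpq with hq | rfl
  · rcases hp.eq_or_lt with rfl | hp
    · simp
    exact mul_le_mul_of_nonneg_left
      (log_le_log (div_pos hp (hq.trans_le hqr)) (div_le_div_of_nonneg_left hp.le hq hqr)) hp.le
  · simp

noncomputable def binKL (p q : ℝ) : ℝ :=
  p * log (p / q) + (1 - p) * log ((1 - p) / (1 - q))

lemma mul_log_div_sub_binEnt_le_binKL {p q a b : ℝ} (hp0 : 0 ≤ p) (hp1 : p ≤ 1)
    (hq0 : 0 < q ∨ p = 0) (hq1 : q < 1 ∨ p = 1) (haq : a ≤ q) (hqb : q ≤ b) (ha : a < 1)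
    (hb : 0 < b) :
    p * log ((1 - a) / b) - binEnt p - log (1 - a) ≤ binKL p q := by
  have hlog : ∀ x y : ℝ, y ≠ 0 → x * log (x / y) = x * log x - x * log y := fun x y hy => by
    rcases eq_or_ne x 0 with rfl | hx
    · simp
    · rw [log_div hx hy]; ring
  have h₁ : p * log (p / b) ≤ p * log (p / q) :=
    mul_log_div_le_mul_log_div_of_le hp0 hq0 hqb
  have h₂ : (1 - p) * log ((1 - p) / (1 - a)) ≤ (1 - p) * log ((1 - p) / (1 - q)) :=
    mul_log_div_le_mul_log_div_of_le (by linarith)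
      (hq1.imp (fun h => by linarith) (fun h => by linarith)) (by linarith)
  rw [hlog p b hb.ne'] at h₁
  rw [hlog (1 - p) (1 - a) (by linarith)] at h₂
  rw [binKL, binEnt, log_div (by linarith) hb.ne']
  linarith

lemma sum_pos_or_sum_eq_zero {ι : Type*} {J Q : ι → ℝ} (hQ : ∀ i, 0 ≤ Q i)
    (hJQ : ∀ i, Q i = 0 → J i = 0) (s : Finset ι) :
    0 < ∑ i ∈ s, Q i ∨ ∑ i ∈ s, J i = 0 := by
  refine (sum_nonneg fun i _ => hQ i).lt_or_eq.imp_right fun h => sum_eq_zero fun i hi => ?_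
  exact hJQ i ((sum_eq_zero_iff_of_nonneg fun i _ => hQ i).mp h.symm i hi)

section AbsolutelyContinuous

variable {ι : Type*} [Fintype ι] {J Q : ι → ℝ}
  (hJ : ∀ i, 0 ≤ J i) (hQ : ∀ i, 0 ≤ Q i) (hJQ : ∀ i, Q i = 0 → J i = 0)
include hJ hQ hJQ

lemma binKL_sum_le_sum_mul_log_div (hJ1 : ∑ i, J i = 1) (hQ1 : ∑ i, Q i = 1) (S : Finset ι) :
    binKL (∑ i ∈ S, J i) (∑ i ∈ S, Q i) ≤ ∑ i, J i * log (J i / Q i) := by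
  classical
  have hS := mul_log_div_sum_le_sum_mul_log_div S (fun i _ => hJ i) (fun i _ => hQ i)
    fun i _ => hJQ i
  have hSc := mul_log_div_sum_le_sum_mul_log_div (univ \ S) (fun i _ => hJ i)
    (fun i _ => hQ i) fun i _ => hJQ i
  rw [sum_sdiff_eq_sub (subset_univ S), sum_sdiff_eq_sub (subset_univ S), hJ1, hQ1] at hSc
  rw [binKL, ← sum_sdiff (subset_univ S)]
  linarith

lemma mul_log_div_sub_binEnt_le_sum_mul_log_div (hJ1 : ∑ i, J i = 1) (hQ1 : ∑ i, Q i = 1)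
    (S : Finset ι) {a b : ℝ} (ha : a < 1) (hb : 0 < b)
    (haS : a ≤ ∑ i ∈ S, Q i) (hSb : ∑ i ∈ S, Q i ≤ b) :
    (∑ i ∈ S, J i) * log ((1 - a) / b) - binEnt (∑ i ∈ S, J i) - log (1 - a) ≤
      ∑ i, J i * log (J i / Q i) := by
  classical
  have hS1 : ∑ i ∈ S, J i ≤ 1 := hJ1 ▸ sum_le_univ_sum_of_nonneg hJ
  have hSc := sum_pos_or_sum_eq_zero hQ hJQ (univ \ S)
  rw [sum_sdiff_eq_sub (subset_univ S), sum_sdiff_eq_sub (subset_univ S), hJ1, hQ1] at hSc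
  refine (mul_log_div_sub_binEnt_le_binKL (sum_nonneg fun i _ => hJ i) hS1
    (sum_pos_or_sum_eq_zero hQ hJQ S) ?_ haS hSb ha hb).trans
    (binKL_sum_le_sum_mul_log_div hJ hQ hJQ hJ1 hQ1 S)
  exact hSc.imp (fun h => by linarith) fun h => by linarith

end AbsolutelyContinuous

section Laws

variable {Ω A C : Type*} [Fintype Ω] (μ : Ω → ℝ) (X : Ω → A) (Y : Ω → C)

noncomputable def jointLaw (z : A × C) : ℝ :=
  pr μ (fun ω => X ω = z.1 ∧ Y ω = z.2)

noncomputable def prodLaw (z : A × C) : ℝ :=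
  pr μ (fun ω => X ω = z.1) * pr μ (fun ω => Y ω = z.2)

lemma mutInfo_eq_sum_jointLaw_mul_log_div [Fintype A] [Fintype C] :
    mutInfo μ X Y = ∑ z, jointLaw μ X Y z * log (jointLaw μ X Y z / prodLaw μ X Y z) := by
  rw [mutInfo, Fintype.sum_prod_type]
  rfl

lemma jointLaw_eq_pr (z : A × C) : jointLaw μ X Y z = pr μ (fun ω => (X ω, Y ω) = z) := by
  simp only [jointLaw, Prod.ext_iff]

lemma sum_jointLaw (s : Finset (A × C)) :
    ∑ z ∈ s, jointLaw μ X Y z = pr μ (fun ω => (X ω, Y ω) ∈ s) := by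
  simp only [jointLaw_eq_pr, sum_pr_eq_pr_mem]

variable {μ}

lemma IsPMF.sum_jointLaw [Fintype A] [Fintype C] (hμ : IsPMF μ) :
    ∑ z, jointLaw μ X Y z = 1 := by
  simp only [jointLaw_eq_pr, hμ.sum_pr_eq_one]

lemma IsPMF.sum_prodLaw [Fintype A] [Fintype C] (hμ : IsPMF μ) :
    ∑ z, prodLaw μ X Y z = 1 := by
  simp only [prodLaw, Fintype.sum_prod_type, ← sum_mul_sum, hμ.sum_pr_eq_one, one_mul]

lemma jointLaw_eq_zero_of_prodLaw_eq_zero (hμ : ∀ ω, 0 ≤ μ ω) (z : A × C)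
    (hz : prodLaw μ X Y z = 0) : jointLaw μ X Y z = 0 := by
  refine le_antisymm ?_ (pr_nonneg hμ _)
  rcases mul_eq_zero.mp hz with h | h
  · exact h ▸ pr_mono hμ fun ω hω => hω.1
  · exact h ▸ pr_mono hμ fun ω hω => hω.2

lemma sum_prodLaw [Fintype A] [Fintype C] (s : Finset (A × C)) :
    ∑ z ∈ s, prodLaw μ X Y z = ∑ ω₀, μ ω₀ * pr μ (fun ω => (X ω, Y ω₀) ∈ s) := by
  classical
  have hfiber : ∀ c, pr μ (fun ω => (X ω, c) ∈ s) =
      ∑ a ∈ univ.filter (fun a => (a, c) ∈ s), pr μ (fun ω => X ω = a) := fun c => by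
    rw [sum_pr_eq_pr_mem]
    simp only [mem_filter, mem_univ, true_and]
  rw [← sum_pr_mul_eq_sum_mul Y (fun c => pr μ (fun ω => (X ω, c) ∈ s))]
  simp only [hfiber, mul_sum, sum_filter]
  rw [sum_comm, ← Fintype.sum_prod_type']
  simp only [Prod.mk.eta, mul_ite, mul_zero, sum_ite_mem, univ_inter]
  exact sum_congr rfl fun z _ => mul_comm _ _

end Laws

theorem fano_arbitrary_relations_general {Ω A C : Type*} [Fintype Ω] [Fintype A] [Fintype C]
    (μ : Ω → ℝ) (hμ : IsPMF μ) (X : Ω → A) (Xh : Ω → C)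
    (R : Finset (A × C))
    (pmin pmax : ℝ) (hmin1 : pmin < 1) (hmax0 : 0 < pmax)
    (hsum : pmin + pmax < 1)
    (hmin : ∀ ω₀ : Ω, pmin ≤ pr μ (fun ω => (X ω, Xh ω₀) ∈ R))
    (hmax : ∀ ω₀ : Ω, pr μ (fun ω => (X ω, Xh ω₀) ∈ R) ≤ pmax) :
    pr μ (fun ω => (X ω, Xh ω) ∈ R) ≤
      (mutInfo μ X Xh + binEnt (pr μ (fun ω => (X ω, Xh ω) ∈ R)) + Real.log (1 - pmin)) /
        Real.log ((1 - pmin) / pmax) := by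
  have hR : pmin ≤ ∑ z ∈ R, prodLaw μ X Xh z ∧ ∑ z ∈ R, prodLaw μ X Xh z ≤ pmax := by
    have hmean : ∀ c, ∑ ω, μ ω * c = c := fun c => by rw [← sum_mul, hμ.2, one_mul]
    rw [sum_prodLaw]
    exact ⟨(hmean pmin).symm.trans_le (sum_le_sum fun ω _ => by gcongr; exacts [hμ.1 ω, hmin ω]),
      (sum_le_sum fun ω _ => by gcongr; exacts [hμ.1 ω, hmax ω]).trans (hmean pmax).le⟩
  have hfano := mul_log_div_sub_binEnt_le_sum_mul_log_div
    (J := jointLaw μ X Xh) (Q := prodLaw μ X Xh) (fun _ => pr_nonneg hμ.1 _)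
    (fun _ => mul_nonneg (pr_nonneg hμ.1 _) (pr_nonneg hμ.1 _))
    (jointLaw_eq_zero_of_prodLaw_eq_zero X Xh hμ.1) (hμ.sum_jointLaw X Xh)
    (hμ.sum_prodLaw X Xh) R hmin1 hmax0 hR.1 hR.2
  rw [sum_jointLaw, ← mutInfo_eq_sum_jointLaw_mul_log_div] at hfano
  rw [le_div_iff₀ (log_pos ((one_lt_div hmax0).mpr (by linarith)))]
  linarith

theorem fano_arbitrary_relations {Ω A B C : Type*} [Fintype Ω] [Fintype A] [Fintype B] [Fintype C]
    [DecidableEq A] [DecidableEq C]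
    (μ : Ω → ℝ) (hμ : IsPMF μ) (X : Ω → A) (Y : Ω → B) (Xh : Ω → C)
    (hMC : MarkovChain μ X Y Xh) (R : Finset (A × C))
    (pmin pmax : ℝ) (hmin0 : 0 ≤ pmin) (hmin1 : pmin < 1) (hmax0 : 0 < pmax) (hmax1 : pmax ≤ 1)
    (hsum : pmin + pmax < 1)
    (hmin : ∀ ω₀ : Ω, pmin ≤ pr μ (fun ω => (X ω, Xh ω₀) ∈ R))
    (hmax : ∀ ω₀ : Ω, pr μ (fun ω => (X ω, Xh ω₀) ∈ R) ≤ pmax) :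
    pr μ (fun ω => (X ω, Xh ω) ∈ R) ≤
      (mutInfo μ X Xh + binEnt (pr μ (fun ω => (X ω, Xh ω) ∈ R)) + Real.log (1 - pmin)) /
        Real.log ((1 - pmin) / pmax) :=
  fano_arbitrary_relations_general μ hμ X Xh R pmin pmax hmin1 hmax0 hsum hmin hmax
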